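/- arXiv:1404.2957 — 2 statements merged into one kernel-verified Lean document; each statement's English description precedes it below -/
import Mathlib

section
/- If Z is a Poisson random variable with mean μ ∈ (0,∞), then μ log μ ≤ E[Z log Z] ≤ μ log μ + 1, where 0 log 0 is interpreted as 0. -/
/-!
Both bounds are Jensen's inequality, each obtained by summing a tangent line against the Poisson
weights. The tangent to `x log x` at `μ` gives the lower bound. For the upper bound, the Stein–Chen
identity turns `E[Z log Z]` into `μ E[log (Z + 1)]`; the tangent to `log` at `1 + μ` bounds this by
`μ log (1 + μ)`, and `log (1 + μ) ≤ log μ + 1 / μ`.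
-/

open Real
open scoped Nat

noncomputable def poissonWeight (μ : ℝ) (k : ℕ) : ℝ := exp (-μ) * μ ^ k / k !

lemma poissonWeight_nonneg {μ : ℝ} (hμ : 0 ≤ μ) (k : ℕ) : 0 ≤ poissonWeight μ k := by
  unfold poissonWeight; positivity

lemma succ_mul_poissonWeight_succ (μ : ℝ) (k : ℕ) :
    (k + 1 : ℝ) * poissonWeight μ (k + 1) = μ * poissonWeight μ k := by
  simp only [poissonWeight, Nat.factorial_succ, pow_succ, Nat.cast_mul, Nat.cast_succ]
  field_simp

lemma hasSum_poissonWeight (μ : ℝ) : HasSum (poissonWeight μ) 1 := by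
  have h := (NormedSpace.expSeries_div_hasSum_exp μ).mul_left (exp (-μ))
  rw [← exp_eq_exp_ℝ, ← exp_add, neg_add_cancel, exp_zero] at h
  show HasSum (fun k ↦ exp (-μ) * μ ^ k / k !) 1
  simpa only [mul_div_assoc] using h

/-- The Stein–Chen identity `E[Z g(Z)] = μ E[g(Z + 1)]`. -/
lemma HasSum.natCast_mul_poissonWeight {μ a : ℝ} {g : ℕ → ℝ}
    (h : HasSum (fun k ↦ g (k + 1) * poissonWeight μ k) a) :
    HasSum (fun k ↦ k * g k * poissonWeight μ k) (μ * a) := by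
  have shift (k : ℕ) : (k + 1 : ℝ) * g (k + 1) * poissonWeight μ (k + 1) =
      μ * (g (k + 1) * poissonWeight μ k) := by
    rw [mul_right_comm, succ_mul_poissonWeight_succ]; ring
  rw [← hasSum_nat_add_iff' 1]
  simpa [shift] using h.mul_left μ

lemma hasSum_natCast_mul_poissonWeight (μ : ℝ) :
    HasSum (fun k ↦ k * poissonWeight μ k) μ := by
  have h := (hasSum_poissonWeight μ).congr_fun fun k ↦ one_mul (poissonWeight μ k)
  simpa using h.natCast_mul_poissonWeight (g := fun _ ↦ 1)

lemma summable_log_succ_mul_poissonWeight {μ : ℝ} (hμ : 0 ≤ μ) :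
    Summable fun k : ℕ ↦ log (k + 1) * poissonWeight μ k := by
  refine (hasSum_natCast_mul_poissonWeight μ).summable.of_nonneg_of_le
    (fun k ↦ mul_nonneg (log_nonneg (by simp)) (poissonWeight_nonneg hμ k)) fun k ↦ ?_
  refine mul_le_mul_of_nonneg_right ?_ (poissonWeight_nonneg hμ k)
  simpa using log_le_sub_one_of_pos (x := k + 1) (by positivity)

lemma log_le_tangent_line {y c : ℝ} (hy : 0 < y) (hc : 0 < c) :
    log y ≤ log c + c⁻¹ * (y - c) := by
  have h := log_le_sub_one_of_pos (div_pos hy hc)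
  rw [log_div hy.ne' hc.ne'] at h
  have : y / c - 1 = c⁻¹ * (y - c) := by field_simp
  linarith

lemma tangent_line_le_mul_log {x c : ℝ} (hx : 0 ≤ x) (hc : 0 < c) :
    c * log c + (log c + 1) * (x - c) ≤ x * log x := by
  rcases hx.eq_or_lt with rfl | hx
  · linarith
  have h := mul_le_mul_of_nonneg_left (log_le_tangent_line hc hx) hx.le
  rw [mul_add, ← mul_assoc, mul_inv_cancel₀ hx.ne'] at h
  linarith

section TangentLine

variable {ι : Type*} {p x f : ι → ℝ} {m s a b : ℝ}

lemma hasSum_tangent_line (hp : HasSum p 1) (hm : HasSum (fun i ↦ x i * p i) m) :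
    HasSum (fun i ↦ (a + b * (x i - m)) * p i) a := by
  have h := ((hp.mul_left a).add (hm.mul_left b)).sub (hp.mul_left (b * m))
  rw [mul_one, mul_one, add_sub_cancel_right] at h
  exact h.congr_fun fun i ↦ by ring

lemma le_of_hasSum_of_le_tangent_line (hp0 : ∀ i, 0 ≤ p i) (hp : HasSum p 1)
    (hm : HasSum (fun i ↦ x i * p i) m) (hs : HasSum (fun i ↦ f i * p i) s)
    (hf : ∀ i, f i ≤ a + b * (x i - m)) : s ≤ a :=
  hasSum_le (fun i ↦ mul_le_mul_of_nonneg_right (hf i) (hp0 i)) hs (hasSum_tangent_line hp hm)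

lemma le_of_hasSum_of_tangent_line_le (hp0 : ∀ i, 0 ≤ p i) (hp : HasSum p 1)
    (hm : HasSum (fun i ↦ x i * p i) m) (hs : HasSum (fun i ↦ f i * p i) s)
    (hf : ∀ i, a + b * (x i - m) ≤ f i) : a ≤ s :=
  hasSum_le (fun i ↦ mul_le_mul_of_nonneg_right (hf i) (hp0 i)) (hasSum_tangent_line hp hm) hs

end TangentLine

/-- If `Z ~ Poisson(μ)` with `μ ∈ (0,∞)`, then
`μ log μ ≤ E[Z log Z] ≤ μ log μ + 1`, where `0 log 0 = 0`
(automatic since `Real.log 0 = 0`). -/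
theorem poisson_entropy_bounds (μ : ℝ) (hμ : 0 < μ) :
    μ * Real.log μ ≤
      ∑' k : ℕ, (k * Real.log k) * (Real.exp (-μ) * μ ^ k / (Nat.factorial k)) ∧
    ∑' k : ℕ, (k * Real.log k) * (Real.exp (-μ) * μ ^ k / (Nat.factorial k)) ≤
      μ * Real.log μ + 1 := by
  have hp0 := poissonWeight_nonneg hμ.le
  have hp := hasSum_poissonWeight μ
  have hm := hasSum_natCast_mul_poissonWeight μ
  obtain ⟨S, hS⟩ := summable_log_succ_mul_poissonWeight hμ.le
  have hent : HasSum (fun k : ℕ ↦ (k * log k) * poissonWeight μ k) (μ * S) :=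
    HasSum.natCast_mul_poissonWeight (g := fun k ↦ log k) (by simpa using hS)
  have hlog : S ≤ log (1 + μ) :=
    le_of_hasSum_of_le_tangent_line hp0 hp hm hS fun k ↦ by
      simpa [add_comm, add_sub_add_right_eq_sub] using
        log_le_tangent_line (y := k + 1) (c := 1 + μ) (by positivity) (by positivity)
  have hlog_one_add : log (1 + μ) ≤ log μ + μ⁻¹ := by
    simpa using log_le_tangent_line (y := 1 + μ) (by positivity) hμ
  have hE : ∑' k : ℕ, (k * log k) * (exp (-μ) * μ ^ k / k !) = μ * S := hent.tsum_eq
  rw [hE]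
  constructor
  · exact le_of_hasSum_of_tangent_line_le hp0 hp hm hent fun k ↦
      tangent_line_le_mul_log k.cast_nonneg hμ
  · calc μ * S ≤ μ * (log μ + μ⁻¹) := by gcongr; exact hlog.trans hlog_one_add
      _ = μ * log μ + 1 := by field_simp
end

section
/- Fix a > 0 and d ≥ 1. There exists a finite collection C_a of disjoint compact subsets of [−2a,2a]^d, each of Lebesgue measure at least (a/(2d))^d, such that for every additive function f(x) = Σ_{j=1}^d fⱼ(xⱼ) + c with each fⱼ satisfying fⱼ(0) = 0 and being linear, monotone, convex, or concave (possibly combined with monotonicity), we have max over C ∈ C_a of max(inf_{x∈C} f(x), inf_{x∈C} −f(x)) ≥ (1/4)·max{sup_{|x₁|≤a}|f₁(x₁)|, ..., sup_{|x_d|≤a}|f_d(x_d)|, 2|c|}. -/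
/-!
Put `δ = a / (4d)` and let `𝒞` consist of the `3^d` boxes with factors `[-2a,-a]`, `[-δ,δ]`,
`[a,2a]`. Each `fⱼ` is monotone, antitone, convex or concave with `fⱼ 0 = 0`, hence
`sup_{[-a,a]} |fⱼ| = mⱼ := max |fⱼ a| |fⱼ (-a)|`, and
* on one of the three intervals `fⱼ ≥ -mⱼ/(4d)`: a side interval if `fⱼ` is monotone, the middle
  one if it is convex or concave, because convexity through `0` gives `|fⱼ| ≤ (δ/a) mⱼ` on `[-δ,δ]`;
* on `[a,2a]` or on `[-2a,-a]`, `fⱼ ≥ mⱼ` or `fⱼ ≤ -mⱼ`, because for convex `g` with `g 0 = 0`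
  the slope `g t / t` is nondecreasing.

Let `M = max (maxⱼ mⱼ) (2|c|)` and replace `(f, c)` by `(-f, -c)` if needed. If `M = 2|c| = 2c`,
intervals of the first kind give a box on which `f ≥ -d·M/(4d) + M/2 = M/4`. Otherwise an interval
of the second kind for a coordinate with `mⱼ = M` and of the first kind for the others give
`f ≥ M - (d-1)·M/(4d) - M/2 ≥ M/4`.
-/
open MeasureTheory

/-- A function satisfies one of the nine shape constraints: linear; monotone
increasing; monotone decreasing; convex; convex increasing; convex decreasing;
concave; concave increasing; concave decreasing. -/
def Shaped (g : ℝ → ℝ) : Prop :=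
  (∃ b : ℝ, ∀ x, g x = b * x) ∨
  Monotone g ∨ Antitone g ∨
  ConvexOn ℝ Set.univ g ∨ (ConvexOn ℝ Set.univ g ∧ Monotone g) ∨
  (ConvexOn ℝ Set.univ g ∧ Antitone g) ∨
  ConcaveOn ℝ Set.univ g ∨ (ConcaveOn ℝ Set.univ g ∧ Monotone g) ∨
  (ConcaveOn ℝ Set.univ g ∧ Antitone g)

open Set

variable {g : ℝ → ℝ} {a δ t : ℝ}

namespace ConvexOn

theorem map_mul_le (hg : ConvexOn ℝ univ g) (h0 : g 0 = 0) {μ : ℝ} (hμ₀ : 0 ≤ μ) (hμ₁ : μ ≤ 1)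
    (u : ℝ) : g (μ * u) ≤ μ * g u := by
  simpa [h0] using hg.2 (mem_univ u) (mem_univ 0) hμ₀ (sub_nonneg.2 hμ₁) (add_sub_cancel μ 1)

theorem neg_map_neg_le (hg : ConvexOn ℝ univ g) (h0 : g 0 = 0) (t : ℝ) : -g (-t) ≤ g t := by
  have := hg.2 (mem_univ t) (mem_univ (-t)) (by norm_num : (0 : ℝ) ≤ 1 / 2)
    (by norm_num : (0 : ℝ) ≤ 1 / 2) (by norm_num)
  rw [show (1 / 2 : ℝ) • t + (1 / 2 : ℝ) • -t = 0 by simp, h0, smul_eq_mul, smul_eq_mul] at this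
  linarith

theorem mul_map_le_mul_map (hg : ConvexOn ℝ univ g) (h0 : g 0 = 0) {u : ℝ} (ht : t ≤ 0)
    (hu : 0 ≤ u) : t * g u ≤ u * g t := by
  rcases eq_or_lt_of_le (ht.trans hu) with rfl | htu
  · rfl
  have hut : 0 < u - t := sub_pos.2 htu
  have := hg.2 (mem_univ t) (mem_univ u) (div_nonneg hu hut.le)
    (div_nonneg (neg_nonneg.2 ht) hut.le) (by field_simp; ring)
  rw [show (u / (u - t)) • t + (-t / (u - t)) • u = 0 by simp only [smul_eq_mul]; ring, h0,
    smul_eq_mul, smul_eq_mul, ← mul_div_right_comm, ← mul_div_right_comm, ← add_div,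
    le_div_iff₀ hut, zero_mul] at this
  linarith

theorem map_le_max_abs_of_mem_Icc (hg : ConvexOn ℝ univ g) (ht : t ∈ Icc (-a) a) :
    g t ≤ max |g a| |g (-a)| := by
  have hle : g t ≤ max (g (-a)) (g a) :=
    hg.le_on_segment (mem_univ _) (mem_univ _) (by rwa [segment_eq_Icc (by linarith [ht.1, ht.2])])
  rw [max_comm] at hle
  exact hle.trans (max_le_max (le_abs_self _) (le_abs_self _))

theorem abs_map_le_max_abs_of_mem_Icc (hg : ConvexOn ℝ univ g) (h0 : g 0 = 0)
    (ht : t ∈ Icc (-a) a) : |g t| ≤ max |g a| |g (-a)| := by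
  have hneg : -t ∈ Icc (-a) a := ⟨neg_le_neg ht.2, by linarith [ht.1]⟩
  exact abs_le.2 ⟨by linarith [hg.neg_map_neg_le h0 t, hg.map_le_max_abs_of_mem_Icc hneg],
    hg.map_le_max_abs_of_mem_Icc ht⟩

theorem abs_map_le_div_mul_max_abs_of_mem_Icc (hg : ConvexOn ℝ univ g) (h0 : g 0 = 0)
    (hδ : 0 < δ) (hδa : δ ≤ a) (ht : t ∈ Icc (-δ) δ) :
    |g t| ≤ δ / a * max |g a| |g (-a)| := by
  have ha : 0 < a := hδ.trans_le hδa
  have upper : ∀ s ∈ Icc (-δ) δ, g s ≤ δ / a * max |g a| |g (-a)| := by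
    intro s hs
    have hs' : a / δ * s ∈ Icc (-a) a := by
      constructor <;> rw [div_mul_eq_mul_div] <;>
        [rw [le_div_iff₀ hδ]; rw [div_le_iff₀ hδ]] <;> nlinarith [hs.1, hs.2]
    calc g s = g (δ / a * (a / δ * s)) := by field_simp
      _ ≤ δ / a * g (a / δ * s) :=
        hg.map_mul_le h0 (by positivity) ((div_le_one ha).2 hδa) _
      _ ≤ δ / a * max |g a| |g (-a)| := by
        gcongr
        exact (le_abs_self _).trans (hg.abs_map_le_max_abs_of_mem_Icc h0 hs')
  have hneg : -t ∈ Icc (-δ) δ := ⟨neg_le_neg ht.2, by linarith [ht.1]⟩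
  exact abs_le.2 ⟨by linarith [hg.neg_map_neg_le h0 t, upper (-t) hneg], upper t ht⟩

end ConvexOn

def CoarseShaped (g : ℝ → ℝ) : Prop :=
  Monotone g ∨ Antitone g ∨ ConvexOn ℝ univ g ∨ ConcaveOn ℝ univ g

theorem Shaped.coarseShaped (h : Shaped g) : CoarseShaped g := by
  rcases h with ⟨b, hb⟩ | h | h | h | ⟨h, -⟩ | ⟨h, -⟩ | h | ⟨h, -⟩ | ⟨h, -⟩
  · obtain rfl : g = fun x => b * x := funext hb
    exact Or.inr (Or.inr (Or.inl ((LinearMap.mulLeft ℝ b).convexOn convex_univ)))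
  all_goals unfold CoarseShaped; tauto

def testInterval (a δ : ℝ) : Fin 3 → Set ℝ
  | 0 => Icc (-(2 * a)) (-a)
  | 1 => Icc (-δ) δ
  | 2 => Icc a (2 * a)

namespace CoarseShaped

theorem neg (h : CoarseShaped g) : CoarseShaped fun x => -g x := by
  rcases h with h | h | h | h
  · exact Or.inr (Or.inl h.neg)
  · exact Or.inl h.neg
  · exact Or.inr (Or.inr (Or.inr h.neg))
  · exact Or.inr (Or.inr (Or.inl h.neg))

theorem abs_le_max_abs_of_mem_Icc (hg : CoarseShaped g) (h0 : g 0 = 0) (ht : t ∈ Icc (-a) a) :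
    |g t| ≤ max |g a| |g (-a)| := by
  rcases hg with hg | hg | hg | hg
  · rw [max_comm]; exact abs_le_max_abs_abs (hg ht.1) (hg ht.2)
  · exact abs_le_max_abs_abs (hg ht.2) (hg ht.1)
  · exact hg.abs_map_le_max_abs_of_mem_Icc h0 ht
  · simpa using hg.neg.abs_map_le_max_abs_of_mem_Icc (by simp [h0]) ht

theorem sSup_abs_image_Icc (hg : CoarseShaped g) (h0 : g 0 = 0) (ha : 0 ≤ a) :
    sSup ((fun t => |g t|) '' Icc (-a) a) = max |g a| |g (-a)| := by
  refine IsGreatest.csSup_eq ⟨?_, ?_⟩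
  · rcases max_choice |g a| |g (-a)| with h | h <;> rw [h]
    · exact mem_image_of_mem _ ⟨by linarith, le_rfl⟩
    · exact mem_image_of_mem _ ⟨le_rfl, by linarith⟩
  · rintro _ ⟨t, ht, rfl⟩
    exact hg.abs_le_max_abs_of_mem_Icc h0 ht

theorem exists_testInterval_neg_le (hg : CoarseShaped g) (h0 : g 0 = 0) (hδ : 0 < δ)
    (hδa : δ ≤ a) : ∃ k, ∀ t ∈ testInterval a δ k, -(δ / a * max |g a| |g (-a)|) ≤ g t := by
  have ha : 0 < a := hδ.trans_le hδa
  have hη : 0 ≤ δ / a * max |g a| |g (-a)| := by positivity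
  rcases hg with hg | hg | hg | hg
  · exact ⟨2, fun t ht => by linarith [h0 ▸ hg (ha.le.trans ht.1)]⟩
  · exact ⟨0, fun t ht => by linarith [h0 ▸ hg (ht.2.trans (neg_nonpos.2 ha.le))]⟩
  · exact ⟨1, fun t ht => neg_le_of_abs_le (hg.abs_map_le_div_mul_max_abs_of_mem_Icc h0 hδ hδa ht)⟩
  · refine ⟨1, fun t ht => neg_le_of_abs_le ?_⟩
    simpa using hg.neg.abs_map_le_div_mul_max_abs_of_mem_Icc (by simp [h0]) hδ hδa ht

end CoarseShaped

theorem Monotone.exists_testInterval_max_abs_le (hg : Monotone g) (h0 : g 0 = 0) (ha : 0 ≤ a)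
    (δ : ℝ) : ∃ k, (∀ t ∈ testInterval a δ k, max |g a| |g (-a)| ≤ g t) ∨
      (∀ t ∈ testInterval a δ k, max |g a| |g (-a)| ≤ -g t) := by
  have hpos : 0 ≤ g a := h0 ▸ hg ha
  have hneg : g (-a) ≤ 0 := h0 ▸ hg (neg_nonpos.2 ha)
  rw [abs_of_nonneg hpos, abs_of_nonpos hneg]
  rcases le_total (-g (-a)) (g a) with h | h
  · exact ⟨2, Or.inl fun t ht => by rw [max_eq_left h]; exact hg ht.1⟩
  · exact ⟨0, Or.inr fun t ht => by rw [max_eq_right h]; exact neg_le_neg (hg ht.2)⟩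

theorem ConvexOn.exists_testInterval_max_abs_le (hg : ConvexOn ℝ univ g) (h0 : g 0 = 0)
    (ha : 0 < a) (δ : ℝ) : ∃ k, ∀ t ∈ testInterval a δ k, max |g a| |g (-a)| ≤ g t := by
  rcases max_choice |g a| |g (-a)| with h | h <;> rw [h]
  · rcases le_or_gt 0 (g a) with hpos | hneg
    · refine ⟨2, fun t ht => ?_⟩
      rw [abs_of_nonneg hpos]
      exact hg.le_right_of_left_le'' (mem_univ 0) (mem_univ t) ha ht.1 (h0.trans_le hpos)
    · refine ⟨0, fun t ht => ?_⟩
      have := hg.mul_map_le_mul_map h0 (ht.2.trans (neg_nonpos.2 ha.le)) ha.le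
      rw [abs_of_neg hneg]
      nlinarith [ht.2]
  · rcases le_or_gt 0 (g (-a)) with hpos | hneg
    · refine ⟨0, fun t ht => ?_⟩
      rw [abs_of_nonneg hpos]
      exact hg.le_left_of_right_le'' (mem_univ t) (mem_univ 0) ht.2 (neg_neg_iff_pos.2 ha)
        (h0.trans_le hpos)
    · refine ⟨2, fun t ht => ?_⟩
      have := hg.mul_map_le_mul_map h0 (neg_nonpos.2 ha.le) (ha.le.trans ht.1)
      rw [abs_of_neg hneg]
      nlinarith [ht.1]

theorem CoarseShaped.exists_testInterval_max_abs_le (hg : CoarseShaped g) (h0 : g 0 = 0)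
    (ha : 0 < a) (δ : ℝ) : ∃ k, (∀ t ∈ testInterval a δ k, max |g a| |g (-a)| ≤ g t) ∨
      (∀ t ∈ testInterval a δ k, max |g a| |g (-a)| ≤ -g t) := by
  rcases hg with hg | hg | hg | hg
  · exact hg.exists_testInterval_max_abs_le h0 ha.le δ
  · simpa [h0, or_comm] using hg.neg.exists_testInterval_max_abs_le (by simp [h0]) ha.le δ
  · obtain ⟨k, hk⟩ := hg.exists_testInterval_max_abs_le h0 ha δ
    exact ⟨k, Or.inl hk⟩
  · obtain ⟨k, hk⟩ := hg.neg.exists_testInterval_max_abs_le (by simp [h0]) ha δ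
    exact ⟨k, Or.inr (by simpa using hk)⟩

theorem exists_pi_le_sum {ι κ α : Type*} [Fintype ι] (s : κ → Set α) {f : ι → α → ℝ} {η b : ℝ}
    (hf : ∀ j, ∃ k, ∀ t ∈ s k, -η ≤ f j t) (j₀ : ι) (k₀ : κ) (hb : ∀ t ∈ s k₀, b ≤ f j₀ t) :
    ∃ σ : ι → κ, ∀ x ∈ univ.pi fun j => s (σ j),
      b - (Fintype.card ι - 1) * η ≤ ∑ j, f j (x j) := by
  classical
  choose σ hσ using hf
  refine ⟨Function.update σ j₀ k₀, fun x hx => ?_⟩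
  have hbound : ∀ j, -η + (if j = j₀ then b + η else 0) ≤ f j (x j) := by
    intro j
    have hxj := mem_univ_pi.1 hx j
    by_cases hj : j = j₀
    · subst hj
      simp only [Function.update_self, if_true] at hxj ⊢
      linarith [hb _ hxj]
    · simp only [Function.update_of_ne hj, hj, if_false] at hxj ⊢
      linarith [hσ j _ hxj]
  calc b - (Fintype.card ι - 1) * η = ∑ j, (-η + if j = j₀ then b + η else 0) := by
        rw [Finset.sum_add_distrib, Finset.sum_const, Finset.sum_ite_eq',
          if_pos (Finset.mem_univ _), Finset.card_univ, nsmul_eq_mul]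
        ring
    _ ≤ ∑ j, f j (x j) := Finset.sum_le_sum fun j _ => hbound j

theorem isCompact_testInterval (a δ : ℝ) (k : Fin 3) : IsCompact (testInterval a δ k) := by
  fin_cases k <;> exact isCompact_Icc

theorem testInterval_subset {a δ : ℝ} (ha : 0 ≤ a) (hδ : δ ≤ 2 * a) (k : Fin 3) :
    testInterval a δ k ⊆ Icc (-(2 * a)) (2 * a) := by
  fin_cases k <;> simp only [testInterval] <;> apply Icc_subset_Icc <;> linarith

theorem ofReal_le_volume_testInterval {a δ ℓ : ℝ} (hℓa : ℓ ≤ a) (hℓδ : ℓ ≤ 2 * δ) (k : Fin 3) :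
    ENNReal.ofReal ℓ ≤ volume (testInterval a δ k) := by
  fin_cases k <;> simp only [testInterval, Real.volume_Icc] <;> gcongr <;> linarith

theorem disjoint_testInterval {a δ : ℝ} (ha : 0 < a) (hδ : δ < a) {k l : Fin 3} (hkl : k ≠ l) :
    Disjoint (testInterval a δ k) (testInterval a δ l) := by
  rw [Set.disjoint_left]
  fin_cases k <;> fin_cases l <;> simp only [testInterval] <;> first
    | exact absurd rfl hkl
    | rintro x ⟨h₁, h₂⟩ ⟨h₃, h₄⟩; linarith

section testBox

variable {ι : Type*}

def testBox (a δ : ℝ) (σ : ι → Fin 3) : Set (ι → ℝ) :=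
  univ.pi fun j => testInterval a δ (σ j)

theorem isCompact_testBox (a δ : ℝ) (σ : ι → Fin 3) : IsCompact (testBox a δ σ) :=
  isCompact_univ_pi fun j => isCompact_testInterval a δ (σ j)

theorem testBox_subset {a δ : ℝ} (ha : 0 ≤ a) (hδ : δ ≤ 2 * a) (σ : ι → Fin 3) :
    testBox a δ σ ⊆ univ.pi fun _ => Icc (-(2 * a)) (2 * a) :=
  pi_mono fun j _ => testInterval_subset ha hδ (σ j)

theorem ofReal_pow_le_volume_testBox [Fintype ι] {a δ ℓ : ℝ} (hℓ : 0 ≤ ℓ) (hℓa : ℓ ≤ a)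
    (hℓδ : ℓ ≤ 2 * δ) (σ : ι → Fin 3) :
    ENNReal.ofReal (ℓ ^ Fintype.card ι) ≤ volume (testBox a δ σ) := by
  rw [testBox, volume_pi_pi, ENNReal.ofReal_pow hℓ]
  exact Finset.pow_card_le_prod _ _ _ fun j _ => ofReal_le_volume_testInterval hℓa hℓδ (σ j)

theorem pairwise_disjoint_image_testBox [Fintype ι] [DecidableEq ι] {a δ : ℝ} (ha : 0 < a)
    (hδ : δ < a) :
    ((Finset.univ.image (testBox (ι := ι) a δ) : Finset _) : Set (Set (ι → ℝ))).Pairwise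
      Disjoint := by
  simp only [Finset.coe_image, Finset.coe_univ, image_univ]
  rintro _ ⟨σ, rfl⟩ _ ⟨τ, rfl⟩ hne
  obtain ⟨j, hj⟩ := Function.ne_iff.1 (ne_of_apply_ne _ hne)
  exact disjoint_univ_pi.2 ⟨j, disjoint_testInterval ha hδ hj⟩

variable [Fintype ι] [Nonempty ι] {f : ι → ℝ → ℝ}

theorem exists_testBox_quarter_le_add {c M : ℝ} (ha : 0 < a) (hf : ∀ j, CoarseShaped (f j))
    (h0 : ∀ j, f j 0 = 0) (hfM : ∀ j, max |f j a| |f j (-a)| ≤ M)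
    (hc : M / 2 ≤ c ∨ -(M / 2) ≤ c ∧
      ∃ j₀ k₀, ∀ t ∈ testInterval a (a / (4 * Fintype.card ι)) k₀, M ≤ f j₀ t) :
    ∃ σ, ∀ x ∈ testBox a (a / (4 * Fintype.card ι)) σ, M / 4 ≤ ∑ j, f j (x j) + c := by
  set d : ℝ := (Fintype.card ι : ℝ)
  have hd : 1 ≤ d := Nat.one_le_cast.2 Fintype.card_pos
  have hδ : 0 < a / (4 * d) := by positivity
  have hδa : a / (4 * d) ≤ a := div_le_self ha.le (by linarith)
  have hM : 0 ≤ M := (le_max_of_le_left (abs_nonneg _)).trans (hfM (Classical.arbitrary ι))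
  have hη : d * (M / (4 * d)) = M / 4 := by field_simp
  have hD : ∀ j, ∃ k, ∀ t ∈ testInterval a (a / (4 * d)) k, -(M / (4 * d)) ≤ f j t := by
    intro j
    obtain ⟨k, hk⟩ := (hf j).exists_testInterval_neg_le (h0 j) hδ hδa
    refine ⟨k, fun t ht => le_trans (neg_le_neg ?_) (hk t ht)⟩
    calc a / (4 * d) / a * max |f j a| |f j (-a)| = max |f j a| |f j (-a)| / (4 * d) := by
          field_simp
      _ ≤ M / (4 * d) := by gcongr; exact hfM j
  rcases hc with hc | ⟨hc, j₀, k₀, hk₀⟩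
  · obtain ⟨k₀, hk₀⟩ := hD (Classical.arbitrary ι)
    obtain ⟨σ, hσ⟩ := exists_pi_le_sum _ hD _ _ hk₀
    exact ⟨σ, fun x hx => by linarith [hσ x hx]⟩
  · obtain ⟨σ, hσ⟩ := exists_pi_le_sum _ hD _ _ hk₀
    have : 0 ≤ M / (4 * d) := by positivity
    exact ⟨σ, fun x hx => by linarith [hσ x hx]⟩

theorem exists_testBox_quarter_le (ha : 0 < a) (hf : ∀ j, CoarseShaped (f j))
    (h0 : ∀ j, f j 0 = 0) (c : ℝ) :
    ∃ σ, (∀ x ∈ testBox a (a / (4 * Fintype.card ι)) σ,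
        1 / 4 * max (⨆ j, max |f j a| |f j (-a)|) (2 * |c|) ≤ ∑ j, f j (x j) + c) ∨
      (∀ x ∈ testBox a (a / (4 * Fintype.card ι)) σ,
        1 / 4 * max (⨆ j, max |f j a| |f j (-a)|) (2 * |c|) ≤ -(∑ j, f j (x j) + c)) := by
  set δ := a / (4 * Fintype.card ι)
  set M := max (⨆ j, max |f j a| |f j (-a)|) (2 * |c|)
  have hfM (j) : max |f j a| |f j (-a)| ≤ M :=
    (le_ciSup (f := fun j => max |f j a| |f j (-a)|) (finite_range _).bddAbove j).trans
      (le_max_left _ _)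
  have hcM : |c| ≤ M / 2 := by linarith [le_max_right (⨆ j, max |f j a| |f j (-a)|) (2 * |c|)]
  have hdom : (M / 2 ≤ c ∨ -(M / 2) ≤ c ∧ ∃ j₀ k₀, ∀ t ∈ testInterval a δ k₀, M ≤ f j₀ t) ∨
      (M / 2 ≤ -c ∨ -(M / 2) ≤ -c ∧ ∃ j₀ k₀, ∀ t ∈ testInterval a δ k₀, M ≤ -f j₀ t) := by
    obtain hM | hM : M = (⨆ j, max |f j a| |f j (-a)|) ∨ M = 2 * |c| := max_choice _ _
    · obtain ⟨j₀, hj₀⟩ := exists_eq_ciSup_of_finite (f := fun j => max |f j a| |f j (-a)|)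
      obtain ⟨k₀, hk | hk⟩ := (hf j₀).exists_testInterval_max_abs_le (h0 j₀) ha δ
      · exact Or.inl (Or.inr ⟨by linarith [neg_abs_le c], j₀, k₀, fun t ht => by
          simpa only [hM, ← hj₀] using hk t ht⟩)
      · exact Or.inr (Or.inr ⟨by linarith [le_abs_self c], j₀, k₀, fun t ht => by
          simpa only [hM, ← hj₀] using hk t ht⟩)
    · rcases le_total 0 c with hc | hc
      · exact Or.inl (Or.inl (by rw [hM, abs_of_nonneg hc]; linarith))
      · exact Or.inr (Or.inl (by rw [hM, abs_of_nonpos hc]; linarith))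
  rcases hdom with hdom | hdom
  · obtain ⟨σ, hσ⟩ := exists_testBox_quarter_le_add ha hf h0 hfM hdom
    exact ⟨σ, Or.inl fun x hx => by linarith [hσ x hx]⟩
  · obtain ⟨σ, hσ⟩ := exists_testBox_quarter_le_add ha (fun j => (hf j).neg) (by simpa using h0)
      (by simpa using hfM) hdom
    refine ⟨σ, Or.inr fun x hx => ?_⟩
    have := hσ x hx
    rw [Finset.sum_neg_distrib] at this
    linarith

end testBox

/-- Lemma 2 of the paper: for `a > 0` there is a finite collection `𝒞` of disjoint
compact subsets of `[−2a,2a]^d`, each of Lebesgue measure at least `(a/(2d))^d`,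
such that for every shape-constrained additive function
`f(x) = Σⱼ fⱼ(xⱼ) + c` (each `fⱼ(0) = 0`),
`max_{C ∈ 𝒞} max (inf_C f) (inf_C (−f)) ≥ (1/4)·max {supⱼ sup_{|xⱼ|≤a} |fⱼ(xⱼ)|, 2|c|}`. -/
theorem exists_collection_additive_lower_bound (d : ℕ) (hd : 1 ≤ d) (a : ℝ) (ha : 0 < a) :
    ∃ 𝒞 : Finset (Set (Fin d → ℝ)),
      (∀ C ∈ 𝒞, IsCompact C ∧
        C ⊆ Set.univ.pi (fun _ => Set.Icc (-(2 * a)) (2 * a)) ∧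
        ENNReal.ofReal ((a / (2 * d)) ^ d) ≤ volume C) ∧
      ((𝒞 : Set (Set (Fin d → ℝ)))).Pairwise Disjoint ∧
      ∀ (f : Fin d → ℝ → ℝ) (c : ℝ),
        (∀ j, Shaped (f j)) → (∀ j, f j 0 = 0) →
        ∃ C ∈ 𝒞,
          (∀ x ∈ C,
            (1 / 4) * max (⨆ j, sSup ((fun t => |f j t|) '' Set.Icc (-a) a)) (2 * |c|)
              ≤ (∑ j, f j (x j)) + c) ∨
          (∀ x ∈ C,
            (1 / 4) * max (⨆ j, sSup ((fun t => |f j t|) '' Set.Icc (-a) a)) (2 * |c|)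
              ≤ -((∑ j, f j (x j)) + c)) := by
  have : Nonempty (Fin d) := ⟨⟨0, hd⟩⟩
  have hd' : (1 : ℝ) ≤ d := Nat.one_le_cast.2 hd
  have hδ : a / (4 * d) ≤ a := div_le_self ha.le (by linarith)
  refine ⟨Finset.univ.image (testBox a (a / (4 * d))), ?_,
    pairwise_disjoint_image_testBox ha (div_lt_self ha (by linarith)), ?_⟩
  · simp only [Finset.mem_image, Finset.mem_univ, true_and]
    rintro _ ⟨σ, rfl⟩
    refine ⟨isCompact_testBox _ _ σ, testBox_subset ha.le (by linarith) σ, ?_⟩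
    simpa using ofReal_pow_le_volume_testBox (by positivity)
      (div_le_self ha.le (by linarith)) (le_of_eq (by ring)) σ
  · intro f c hf h0
    have hS (j) : sSup ((fun t => |f j t|) '' Icc (-a) a) = max |f j a| |f j (-a)| :=
      (hf j).coarseShaped.sSup_abs_image_Icc (h0 j) ha.le
    obtain ⟨σ, hσ⟩ := exists_testBox_quarter_le ha (fun j => (hf j).coarseShaped) h0 c
    refine ⟨_, Finset.mem_image_of_mem _ (Finset.mem_univ σ), ?_⟩
    simpa only [hS, Fintype.card_fin] using hσ
end
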